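/- arXiv:2402.09374 — 3 statements merged into one kernel-verified Lean document; each statement's English description precedes it below -/
import Mathlib

section
/- For every cumulative distribution function F on the real line with F(0) = 0, one has ∫_{(0,1/e]} (-log u)^3 · log(-log u) dF(u) = 3 ∫_{(0,1/e]} F(u) · (log u)^2 / u · (log(-log u) + 1/3) du. -/
open MeasureTheory Real Set Filter
open scoped ENNReal

/-!
With `φ t = 3 (log t)² / t · (log (-log t) + 1/3)`, which is nonnegative on `(0, 1/e]`, the
integrand on the left is `(-log u)³ log (-log u) = ∫_{[u, 1/e]} φ`, since it vanishes at `1/e`.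
Integrating in `u` against `dF` and swapping the order (Tonelli) gives
`∫_{(0, 1/e]} φ(t) F((0, t]) dt`, and `F((0, t]) = F t - F 0 = F t`.
-/

section

variable {G G' : ℝ → ℝ} {u b : ℝ}

theorem integrableOn_Icc_of_hasDerivAt_of_nonneg (hderiv : ∀ t ∈ Icc u b, HasDerivAt G (G' t) t)
    (hpos : ∀ t ∈ Icc u b, 0 ≤ G' t) : IntegrableOn G' (Icc u b) :=
  (integrableOn_Icc_iff_integrableOn_Ioc).mpr <|
    intervalIntegral.integrableOn_deriv_of_nonneg
      (fun t ht => (hderiv t ht).continuousAt.continuousWithinAt)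
      (fun t ht => hderiv t (Ioo_subset_Icc_self ht)) (fun t ht => hpos t (Ioo_subset_Icc_self ht))

theorem setIntegral_Icc_eq_sub_of_hasDerivAt_of_nonneg (hub : u ≤ b)
    (hderiv : ∀ t ∈ Icc u b, HasDerivAt G (G' t) t) (hpos : ∀ t ∈ Icc u b, 0 ≤ G' t) :
    ∫ t in Icc u b, G' t = G b - G u := by
  rw [integral_Icc_eq_integral_Ioc, ← intervalIntegral.integral_of_le hub]
  exact intervalIntegral.integral_eq_sub_of_hasDerivAt_of_le hub
    (fun t ht => (hderiv t ht).continuousAt.continuousWithinAt)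
    (fun t ht => hderiv t (Ioo_subset_Icc_self ht))
    ((intervalIntegrable_iff_integrableOn_Icc_of_le hub).mpr
      (integrableOn_Icc_of_hasDerivAt_of_nonneg hderiv hpos))

end

namespace StieltjesFunction

variable (F : StieltjesFunction ℝ) {a b : ℝ}

theorem lintegral_Ioc_indicator_Icc (h : ℝ → ℝ≥0∞) (t : ℝ) :
    ∫⁻ u in Ioc a b, (Icc u b).indicator h t ∂F.measure
      = (Ioc a b).indicator (fun s => ENNReal.ofReal (F s - F a) * h s) t := by
  by_cases ht : t ∈ Ioc a b
  · have hIcc : ∀ u, (Icc u b).indicator h t = (Iic t).indicator (fun _ => h t) u := by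
      intro u
      by_cases hut : u ≤ t <;> simp [hut, ht.2]
    have hset : Iic t ∩ Ioc a b = Ioc a t := by
      ext u
      simp only [mem_inter_iff, mem_Iic, mem_Ioc]
      constructor
      · rintro ⟨hut, hau, -⟩
        exact ⟨hau, hut⟩
      · rintro ⟨hau, hut⟩
        exact ⟨hut, hau, hut.trans ht.2⟩
    simp_rw [hIcc]
    rw [lintegral_indicator measurableSet_Iic, Measure.restrict_restrict measurableSet_Iic, hset,
      setLIntegral_const, F.measure_Ioc, indicator_of_mem ht, mul_comm]
  · rw [indicator_of_notMem ht]
    refine setLIntegral_eq_zero measurableSet_Ioc fun u hu => indicator_of_notMem ?_ _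
    exact fun htu => ht ⟨hu.1.trans_le htu.1, htu.2⟩

theorem lintegral_Ioc_lintegral_Icc {h : ℝ → ℝ≥0∞} (hh : Measurable h) :
    ∫⁻ u in Ioc a b, (∫⁻ t in Icc u b, h t) ∂F.measure
      = ∫⁻ t in Ioc a b, ENNReal.ofReal (F t - F a) * h t := by
  have hmeas : Measurable (Function.uncurry fun u t => (Icc u b).indicator h t) := by
    have : Function.uncurry (fun u t => (Icc u b).indicator h t)
        = {q : ℝ × ℝ | q.1 ≤ q.2 ∧ q.2 ≤ b}.indicator (fun q => h q.2) := by
      ext q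
      simp only [Function.uncurry, indicator_apply, mem_Icc, mem_ofPred_eq]
    rw [this]
    exact (hh.comp measurable_snd).indicator
      ((measurableSet_le measurable_fst measurable_snd).inter (measurable_snd measurableSet_Iic))
  calc ∫⁻ u in Ioc a b, (∫⁻ t in Icc u b, h t) ∂F.measure
      = ∫⁻ u in Ioc a b, (∫⁻ t, (Icc u b).indicator h t) ∂F.measure := by
        simp_rw [lintegral_indicator measurableSet_Icc]
    _ = ∫⁻ t, ∫⁻ u in Ioc a b, (Icc u b).indicator h t ∂F.measure :=
        lintegral_lintegral_swap hmeas.aemeasurable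
    _ = ∫⁻ t in Ioc a b, ENNReal.ofReal (F t - F a) * h t := by
        simp_rw [lintegral_Ioc_indicator_Icc, lintegral_indicator measurableSet_Ioc]

theorem setIntegral_Ioc_sub_eq_of_hasDerivAt {G G' : ℝ → ℝ}
    (hderiv : ∀ t ∈ Ioc a b, HasDerivAt G (G' t) t) (hpos : ∀ t ∈ Ioc a b, 0 ≤ G' t)
    (hG' : Measurable G') :
    ∫ u in Ioc a b, (G b - G u) ∂F.measure = ∫ t in Ioc a b, (F t - F a) * G' t := by
  have hsub : ∀ u ∈ Ioc a b, Icc u b ⊆ Ioc a b := fun u hu t ht =>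
    ⟨hu.1.trans_le ht.1, ht.2⟩
  have hftc : ∀ u ∈ Ioc a b, ∫ t in Icc u b, G' t = G b - G u := fun u hu =>
    setIntegral_Icc_eq_sub_of_hasDerivAt_of_nonneg hu.2 (fun t ht => hderiv t (hsub u hu ht))
      (fun t ht => hpos t (hsub u hu ht))
  have hG_nonneg : ∀ u ∈ Ioc a b, 0 ≤ G b - G u := fun u hu =>
    hftc u hu ▸ setIntegral_nonneg measurableSet_Icc fun t ht => hpos t (hsub u hu ht)
  have hG_ofReal : ∀ u ∈ Ioc a b,
      ENNReal.ofReal (G b - G u) = ∫⁻ t in Icc u b, ENNReal.ofReal (G' t) := fun u hu => by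
    rw [← hftc u hu, ofReal_integral_eq_lintegral_ofReal
      (integrableOn_Icc_of_hasDerivAt_of_nonneg (fun t ht => hderiv t (hsub u hu ht))
        (fun t ht => hpos t (hsub u hu ht)))
      (ae_restrict_of_forall_mem measurableSet_Icc fun t ht => hpos t (hsub u hu ht))]
  have hG_cont : ContinuousOn (fun u => G b - G u) (Ioc a b) :=
    continuousOn_const.sub fun t ht => (hderiv t ht).continuousAt.continuousWithinAt
  have hF_nonneg : ∀ t ∈ Ioc a b, 0 ≤ F t - F a := fun t ht => sub_nonneg.mpr (F.mono ht.1.le)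
  have hFG_nonneg : ∀ t ∈ Ioc a b, 0 ≤ (F t - F a) * G' t := fun t ht =>
    mul_nonneg (hF_nonneg t ht) (hpos t ht)
  -- Both sides are compared as `toReal` of lintegrals, so no integrability is needed.
  rw [integral_eq_lintegral_of_nonneg_ae (ae_restrict_of_forall_mem measurableSet_Ioc hG_nonneg)
      (hG_cont.aestronglyMeasurable measurableSet_Ioc),
    integral_eq_lintegral_of_nonneg_ae
      (ae_restrict_of_forall_mem measurableSet_Ioc hFG_nonneg)
      ((F.mono.measurable.sub_const _).mul hG').aestronglyMeasurable,
    setLIntegral_congr_fun measurableSet_Ioc hG_ofReal,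
    lintegral_Ioc_lintegral_Icc F hG'.ennreal_ofReal]
  refine congrArg ENNReal.toReal (setLIntegral_congr_fun measurableSet_Ioc fun t ht => ?_)
  exact (ENNReal.ofReal_mul (hF_nonneg t ht)).symm

end StieltjesFunction

theorem hasDerivAt_neg_log_pow_three_mul_log_neg_log {t : ℝ} (ht : t ≠ 0) (hlog : log t ≠ 0) :
    HasDerivAt (fun s => (-log s) ^ 3 * log (-log s))
      (-(3 * (log t ^ 2 / t) * (log (-log t) + 1 / 3))) t := by
  have hneg : HasDerivAt (fun s => -log s) (-t⁻¹) t := (hasDerivAt_log ht).neg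
  have hlog' : -log t ≠ 0 := neg_ne_zero.mpr hlog
  refine ((hneg.fun_pow 3).fun_mul (hneg.log hlog')).congr_deriv ?_
  field_simp
  ring

theorem stmt_0_general (F : StieltjesFunction ℝ)
    (hF_zero : F 0 = 0) :
    ∫ u in Ioc (0 : ℝ) (exp (-1)), (-Real.log u) ^ 3 * Real.log (-Real.log u) ∂F.measure
      = 3 * ∫ u in Ioc (0 : ℝ) (exp (-1)),
          F u * ((Real.log u) ^ 2 / u) * (Real.log (-Real.log u) + 1 / 3) := by
  have hlog : ∀ t ∈ Ioc (0 : ℝ) (exp (-1)), 1 ≤ -log t := fun t ht =>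
    le_neg.mpr ((log_le_log ht.1 ht.2).trans_eq (log_exp _))
  have hderiv : ∀ t ∈ Ioc (0 : ℝ) (exp (-1)),
      HasDerivAt (fun s => -((-log s) ^ 3 * log (-log s)))
        (3 * (log t ^ 2 / t) * (log (-log t) + 1 / 3)) t := fun t ht =>
    (hasDerivAt_neg_log_pow_three_mul_log_neg_log ht.1.ne'
      (by linarith [hlog t ht])).neg.congr_deriv (neg_neg _)
  have hpos : ∀ t ∈ Ioc (0 : ℝ) (exp (-1)),
      0 ≤ 3 * (log t ^ 2 / t) * (log (-log t) + 1 / 3) := fun t ht =>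
    mul_nonneg (by have := ht.1; positivity) (by linarith [log_nonneg (hlog t ht)])
  have key := F.setIntegral_Ioc_sub_eq_of_hasDerivAt hderiv hpos (by measurability)
  simp only [log_exp, neg_neg, log_one, mul_zero, neg_zero, zero_sub, hF_zero, sub_zero] at key
  rw [key, ← integral_const_mul]
  congr 1 with t
  ring

/-- Lemma 2(1): for a CDF `F` with `F 0 = 0`,
`∫_{(0,1/e]} (-log u)^3 log(-log u) dF(u)
  = 3 ∫_{(0,1/e]} F(u) (log u)^2 / u (log(-log u) + 1/3) du`. -/
theorem stmt_0 (F : StieltjesFunction ℝ)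
    (hF0 : Tendsto F atBot (nhds 0)) (hF1 : Tendsto F atTop (nhds 1))
    (hF_zero : F 0 = 0) :
    ∫ u in Ioc (0 : ℝ) (exp (-1)), (-Real.log u) ^ 3 * Real.log (-Real.log u) ∂F.measure
      = 3 * ∫ u in Ioc (0 : ℝ) (exp (-1)),
          F u * ((Real.log u) ^ 2 / u) * (Real.log (-Real.log u) + 1 / 3) :=
  stmt_0_general F hF_zero
end

section
/- For every cumulative distribution function F on the real line with F(0) = 0, one has ∫_{(0,1/e]} (log u)^4 · log(-log u) dF(u) = 4 ∫_{(0,1/e]} F(u) · (-(log u)^3) / u · (log(-log u) + 1/4) du. -/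
open MeasureTheory Real Set Filter

open scoped ENNReal

/-! The integrand `g u = (log u)^4 log(-log u)` vanishes at `1/e` and decreases on `(0, 1/e]`, so
`g u = ∫_{[u, 1/e]} h` with `h = -g' ≥ 0`. Tonelli exchanges the `dF(u)` and `dt` integrations,
and the `dF`-mass of `(0, t]` is `F t - F 0 = F t`. -/

namespace StieltjesFunction

theorem lintegral_setLIntegral_Icc (F : StieltjesFunction ℝ) (a b : ℝ) {K : ℝ → ℝ≥0∞}
    (hK : Measurable K) :
    ∫⁻ x in Ioc a b, (∫⁻ t in Icc x b, K t) ∂F.measure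
      = ∫⁻ t in Ioc a b, ENNReal.ofReal (F t - F a) * K t := by
  have h_inner : ∀ x ∈ Ioc a b,
      ∫⁻ t in Icc x b, K t = ∫⁻ t in Ioc a b, (Ici x).indicator K t := by
    intro x hx
    have h_set : Ici x ∩ Ioc a b = Icc x b :=
      Set.ext fun t => ⟨fun h => ⟨h.1, h.2.2⟩, fun h => ⟨h.1, hx.1.trans_le h.1, h.2⟩⟩
    rw [lintegral_indicator measurableSet_Ici, Measure.restrict_restrict measurableSet_Ici, h_set]
  have h_outer : ∀ t ∈ Ioc a b,
      ∫⁻ x in Ioc a b, (Ici x).indicator K t ∂F.measure = ENNReal.ofReal (F t - F a) * K t := by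
    intro t ht
    have : (fun x => (Ici x).indicator K t) = (Iic t).indicator (fun _ => K t) := by
      ext x; by_cases hxt : x ≤ t <;> simp [hxt]
    rw [this, lintegral_indicator measurableSet_Iic, setLIntegral_const,
      Measure.restrict_apply measurableSet_Iic, Iic_inter_Ioc_of_le ht.2, F.measure_Ioc, mul_comm]
  have h_meas : Measurable (Function.uncurry fun x t => (Ici x).indicator K t) := by
    have : (Function.uncurry fun x t => (Ici x).indicator K t)
        = fun p : ℝ × ℝ => if p.1 ≤ p.2 then K p.2 else 0 := by
      ext p; simp [Function.uncurry, indicator_apply]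
    rw [this]
    exact Measurable.ite (measurableSet_le measurable_fst measurable_snd)
      (hK.comp measurable_snd) measurable_const
  rw [setLIntegral_congr_fun measurableSet_Ioc h_inner, lintegral_lintegral_swap h_meas.aemeasurable,
    setLIntegral_congr_fun measurableSet_Ioc h_outer]

/-- Both integrands are nonnegative, so this also holds when the integrals diverge
(both sides are then the junk value `0`). -/
theorem setIntegral_Ioc_eq_of_hasDerivAt (F : StieltjesFunction ℝ) {a b : ℝ} {g h : ℝ → ℝ}
    (hgb : g b = 0) (hg : ∀ t ∈ Ioc a b, HasDerivAt g (-h t) t)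
    (hh_cont : ContinuousOn h (Ioc a b)) (hh_meas : Measurable h)
    (hh_nonneg : ∀ t ∈ Ioc a b, 0 ≤ h t) :
    ∫ x in Ioc a b, g x ∂F.measure = ∫ t in Ioc a b, (F t - F a) * h t := by
  have h_ftc : ∀ x ∈ Ioc a b, g x = ∫ t in Icc x b, h t := by
    intro x hx
    have h_sub : Icc x b ⊆ Ioc a b := Icc_subset_Ioc hx.1 le_rfl
    have h_int : IntervalIntegrable (fun t => -h t) volume x b :=
      ((hh_cont.mono h_sub).neg).intervalIntegrable_of_Icc hx.2
    have h_eq := intervalIntegral.integral_eq_sub_of_hasDerivAt_of_le hx.2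
      (fun t ht => (hg t (h_sub ht)).continuousAt.continuousWithinAt)
      (fun t ht => hg t (h_sub (Ioo_subset_Icc_self ht))) h_int
    rw [intervalIntegral.integral_neg, intervalIntegral.integral_of_le hx.2, hgb] at h_eq
    rw [integral_Icc_eq_integral_Ioc]
    linarith
  have h_lintegral : ∀ x ∈ Ioc a b,
      ENNReal.ofReal (g x) = ∫⁻ t in Icc x b, ENNReal.ofReal (h t) := by
    intro x hx
    have h_sub : Icc x b ⊆ Ioc a b := Icc_subset_Ioc hx.1 le_rfl
    rw [h_ftc x hx, ofReal_integral_eq_lintegral_ofReal ((hh_cont.mono h_sub).integrableOn_Icc)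
      ((ae_restrict_iff' measurableSet_Icc).2 (ae_of_all _ fun t ht => hh_nonneg t (h_sub ht)))]
  have hg_nonneg : ∀ x ∈ Ioc a b, 0 ≤ g x := fun x hx => by
    rw [h_ftc x hx]
    exact setIntegral_nonneg measurableSet_Icc fun t ht =>
      hh_nonneg t (Icc_subset_Ioc hx.1 le_rfl ht)
  have hg_cont : ContinuousOn g (Ioc a b) := fun t ht =>
    (hg t ht).continuousAt.continuousWithinAt
  have h_rhs_nonneg : ∀ t ∈ Ioc a b, 0 ≤ (F t - F a) * h t := fun t ht =>
    mul_nonneg (sub_nonneg.2 (F.mono ht.1.le)) (hh_nonneg t ht)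
  rw [integral_eq_lintegral_of_nonneg_ae
      ((ae_restrict_iff' measurableSet_Ioc).2 (ae_of_all _ hg_nonneg))
      (hg_cont.aestronglyMeasurable measurableSet_Ioc),
    integral_eq_lintegral_of_nonneg_ae
      ((ae_restrict_iff' measurableSet_Ioc).2 (ae_of_all _ h_rhs_nonneg))
      (((F.mono.measurable.sub_const _).mul hh_meas).aestronglyMeasurable),
    setLIntegral_congr_fun measurableSet_Ioc h_lintegral,
    F.lintegral_setLIntegral_Icc a b hh_meas.ennreal_ofReal]
  congr 1
  refine setLIntegral_congr_fun measurableSet_Ioc fun t ht => ?_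
  rw [ENNReal.ofReal_mul (sub_nonneg.2 (F.mono ht.1.le))]

end StieltjesFunction

theorem hasDerivAt_log_pow_four_mul_log_neg_log {t : ℝ} (ht₀ : 0 < t) (ht₁ : t < 1) :
    HasDerivAt (fun u => log u ^ 4 * log (-log u))
      (log t ^ 3 / t * (4 * log (-log t) + 1)) t := by
  have h_log : log t < 0 := log_neg ht₀ ht₁
  have h_log_log : HasDerivAt (fun u => log (-log u)) (-t⁻¹ / -log t) t :=
    (hasDerivAt_log ht₀.ne').neg.log (neg_ne_zero.2 h_log.ne)
  refine (((hasDerivAt_log ht₀.ne').pow 4).mul h_log_log).congr_deriv ?_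
  rw [Pi.pow_apply]
  field_simp
  ring

theorem continuousOn_log_pow_three_div_mul :
    ContinuousOn (fun t => log t ^ 3 / t * (4 * log (-log t) + 1)) (Ioo 0 1) := by
  intro t ht
  have := log_neg ht.1 ht.2
  fun_prop (disch := first | exact ht.1.ne' | linarith)

theorem log_pow_three_div_mul_nonpos {t : ℝ} (ht₀ : 0 < t) (ht : t ≤ exp (-1)) :
    log t ^ 3 / t * (4 * log (-log t) + 1) ≤ 0 := by
  have h_log : log t ≤ -1 := by simpa using log_le_log ht₀ ht
  have h_log_log : 0 ≤ log (-log t) := log_nonneg (by linarith)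
  have h_cube : log t ^ 3 / t ≤ 0 :=
    div_nonpos_of_nonpos_of_nonneg (Odd.pow_nonpos ⟨1, rfl⟩ (by linarith)) ht₀.le
  exact mul_nonpos_of_nonpos_of_nonneg h_cube (by linarith)

theorem stmt_2_general (F : StieltjesFunction ℝ)
    (hF_zero : F 0 = 0) :
    ∫ u in Ioc (0 : ℝ) (exp (-1)), (Real.log u) ^ 4 * Real.log (-Real.log u) ∂F.measure
      = 4 * ∫ u in Ioc (0 : ℝ) (exp (-1)),
          F u * (-(Real.log u) ^ 3 / u) * (Real.log (-Real.log u) + 1 / 4) := by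
  have h_sub : Ioc 0 (exp (-1)) ⊆ Ioo (0 : ℝ) 1 := fun t ht =>
    ⟨ht.1, ht.2.trans_lt (exp_lt_one_iff.2 (by norm_num))⟩
  rw [F.setIntegral_Ioc_eq_of_hasDerivAt (h := fun t => -(log t ^ 3 / t * (4 * log (-log t) + 1)))
    (by simp) (fun t ht => by simpa only [neg_neg] using
      hasDerivAt_log_pow_four_mul_log_neg_log (h_sub ht).1 (h_sub ht).2)
    (continuousOn_log_pow_three_div_mul.neg.mono h_sub) (by fun_prop)
    (fun t ht => neg_nonneg.2 (log_pow_three_div_mul_nonpos ht.1 ht.2)),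
    hF_zero, ← integral_const_mul]
  congr 1 with u
  ring

/-- Lemma 3(1): for a CDF `F` with `F 0 = 0`,
`∫_{(0,1/e]} (log u)^4 log(-log u) dF(u)
  = 4 ∫_{(0,1/e]} F(u) (-(log u)^3) / u (log(-log u) + 1/4) du`. -/
theorem stmt_2 (F : StieltjesFunction ℝ)
    (hF0 : Tendsto F atBot (nhds 0)) (hF1 : Tendsto F atTop (nhds 1))
    (hF_zero : F 0 = 0) :
    ∫ u in Ioc (0 : ℝ) (exp (-1)), (Real.log u) ^ 4 * Real.log (-Real.log u) ∂F.measure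
      = 4 * ∫ u in Ioc (0 : ℝ) (exp (-1)),
          F u * (-(Real.log u) ^ 3 / u) * (Real.log (-Real.log u) + 1 / 4) :=
  stmt_2_general F hF_zero
end

section
/- If ξ is an exponentially distributed random variable with mean e^γ / c, where c > 0 and γ is the Euler–Mascheroni constant, then E[(log ξ)²] = (log c)² + π²/6. -/
/-!
Substituting `u = c e^{-γ} x` turns `E[(log ξ)²]` into `∫₀^∞ (log u - L)² e^{-u} du` with
`L = log c - γ`, so only the moments `∫₀^∞ (log u)ⁿ e^{-u} du = Γ⁽ⁿ⁾(1)`, `n ≤ 2`, are needed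
(differentiate the Mellin transform `Γ(s) = ∫ t^{s-1} e^{-t} dt` under the integral sign).
Here `Γ(1) = 1`, `Γ'(1) = -γ`, and `Γ''(1) = ψ'(1) + ψ(1)²` for the digamma function `ψ = Γ'/Γ`.
Finally `ψ'(1) = π²/6`: differentiating the logarithmic derivative of the reflection formula at
`s = 1/2` gives `2ψ'(1/2) = π²`, and doing the same with the duplication formula gives
`ψ'(1/2) + ψ'(1) = 4ψ'(1)`.
-/

open MeasureTheory ProbabilityTheory Real Set Filter Asymptotics
open scoped Topology

lemma isBigO_log_pow_mul_exp_neg_atTop (n : ℕ) (a : ℝ) :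
    (fun t => log t ^ n * exp (-t)) =O[atTop] (· ^ (-a)) := by
  have hlog : (fun t => log t ^ n) =O[atTop] (· ^ (1 : ℝ)) := by
    simpa only [rpow_natCast] using (isLittleO_log_rpow_rpow_atTop (n : ℝ) one_pos).isBigO
  have hexp : (fun t => exp (-t)) =O[atTop] (· ^ (-a - 1)) := by
    simpa only [neg_one_mul] using (isLittleO_exp_neg_mul_rpow_atTop one_pos (-a - 1)).isBigO
  refine (hlog.mul hexp).congr' .rfl ?_
  filter_upwards [eventually_gt_atTop 0] with t ht
  rw [← rpow_add ht]
  ring_nf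

lemma isBigO_log_pow_mul_exp_neg_nhdsGT_zero (n : ℕ) {b : ℝ} (hb : 0 < b) :
    (fun t => log t ^ n * exp (-t)) =O[𝓝[>] 0] (· ^ (-b)) := by
  have hlog : (fun t => log t ^ n) =O[𝓝[>] 0] (· ^ (-b)) := by
    rw [← isBigO_norm_left]
    simpa only [norm_pow, norm_eq_abs, rpow_natCast] using
      (isLittleO_abs_log_rpow_rpow_nhdsGT_zero (n : ℝ) (neg_lt_zero.2 hb)).isBigO
  have hexp : (fun t => exp (-t)) =O[𝓝[>] 0] (fun _ => (1 : ℝ)) :=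
    (continuous_exp.comp continuous_neg).continuousAt.continuousWithinAt.isBigO_one ℝ
  simpa using hlog.mul hexp

lemma locallyIntegrableOn_log_pow_mul_exp_neg (n : ℕ) :
    LocallyIntegrableOn (fun t => ((log t ^ n * exp (-t) : ℝ) : ℂ)) (Ioi 0) := by
  refine ContinuousOn.locallyIntegrableOn (fun t (ht : 0 < t) => ?_) measurableSet_Ioi
  have := continuousAt_log ht.ne'
  exact ContinuousAt.continuousWithinAt (by fun_prop)

lemma mellinConvergent_log_pow_mul_exp_neg (n : ℕ) {s : ℂ} (hs : 0 < s.re) :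
    MellinConvergent (fun t => ((log t ^ n * exp (-t) : ℝ) : ℂ)) s :=
  mellinConvergent_of_isBigO_rpow (locallyIntegrableOn_log_pow_mul_exp_neg n)
    (Complex.isBigO_ofReal_left.2 (isBigO_log_pow_mul_exp_neg_atTop n (s.re + 1))) (lt_add_one _)
    (Complex.isBigO_ofReal_left.2 (isBigO_log_pow_mul_exp_neg_nhdsGT_zero n (half_pos hs)))
    (half_lt_self hs)

lemma hasDerivAt_mellin_log_pow_mul_exp_neg (n : ℕ) {s : ℂ} (hs : 0 < s.re) :
    HasDerivAt (mellin fun t => ((log t ^ n * exp (-t) : ℝ) : ℂ))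
      (mellin (fun t => ((log t ^ (n + 1) * exp (-t) : ℝ) : ℂ)) s) s := by
  have h := (mellin_hasDerivAt_of_isBigO_rpow (locallyIntegrableOn_log_pow_mul_exp_neg n)
    (Complex.isBigO_ofReal_left.2 (isBigO_log_pow_mul_exp_neg_atTop n (s.re + 1))) (lt_add_one _)
    (Complex.isBigO_ofReal_left.2 (isBigO_log_pow_mul_exp_neg_nhdsGT_zero n (half_pos hs)))
    (half_lt_self hs)).2
  have hsmul : (fun t => log t • ((log t ^ n * exp (-t) : ℝ) : ℂ)) =
      fun t => ((log t ^ (n + 1) * exp (-t) : ℝ) : ℂ) := by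
    ext t
    rw [Complex.real_smul]
    push_cast
    ring
  rwa [hsmul] at h

lemma integrableOn_log_pow_mul_exp_neg (n : ℕ) :
    IntegrableOn (fun t => log t ^ n * exp (-t)) (Ioi 0) := by
  have h := mellinConvergent_log_pow_mul_exp_neg n (s := 1) (by norm_num)
  simp only [MellinConvergent, sub_self, Complex.cpow_zero, one_smul] at h
  exact h.re

namespace Complex

lemma ne_neg_natCast_of_re_pos {s : ℂ} (hs : 0 < s.re) (m : ℕ) : s ≠ -m := fun h => by
  have := congrArg re h
  simp only [neg_re, natCast_re] at this
  linarith [m.cast_nonneg (α := ℝ)]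

lemma iteratedDeriv_Gamma_eq_mellin (n : ℕ) {s : ℂ} (hs : 0 < s.re) :
    iteratedDeriv n Gamma s = mellin (fun t => ((Real.log t ^ n * Real.exp (-t) : ℝ) : ℂ)) s := by
  induction n generalizing s with
  | zero => simp [Gamma_eq_integral hs, GammaIntegral_eq_mellin]
  | succ n ih =>
    rw [iteratedDeriv_succ, ← (hasDerivAt_mellin_log_pow_mul_exp_neg n hs).deriv]
    refine EventuallyEq.deriv_eq ?_
    filter_upwards [(isOpen_lt continuous_const continuous_re).mem_nhds hs] with z hz
      using ih hz

lemma iteratedDeriv_Gamma_one (n : ℕ) :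
    iteratedDeriv n Gamma 1 = ((∫ t in Ioi 0, Real.log t ^ n * Real.exp (-t) : ℝ) : ℂ) := by
  rw [iteratedDeriv_Gamma_eq_mellin n (by norm_num), ← integral_complex_ofReal]
  simp [mellin]

lemma analyticAt_Gamma {s : ℂ} (hs : ∀ m : ℕ, s ≠ -m) : AnalyticAt ℂ Gamma s := by
  have h := (differentiable_one_div_Gamma.analyticAt s).inv (inv_ne_zero (Gamma_ne_zero hs))
  simpa [Pi.inv_def] using h

lemma analyticAt_digamma {s : ℂ} (hs : ∀ m : ℕ, s ≠ -m) : AnalyticAt ℂ digamma s :=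
  (analyticAt_Gamma hs).deriv.div (analyticAt_Gamma hs) (Gamma_ne_zero hs)

lemma hasDerivAt_digamma {s : ℂ} (hs : ∀ m : ℕ, s ≠ -m) :
    HasDerivAt digamma
      ((deriv (deriv Gamma) s * Gamma s - deriv Gamma s * deriv Gamma s) / Gamma s ^ 2) s :=
  (analyticAt_Gamma hs).deriv.differentiableAt.hasDerivAt.div
    (analyticAt_Gamma hs).differentiableAt.hasDerivAt (Gamma_ne_zero hs)

lemma digamma_sub_digamma_one_sub {s : ℂ} (hs : ∀ n : ℤ, s ≠ n) :
    digamma s - digamma (1 - s) = -(π * cot (π * s)) := by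
  have hs₁ : ∀ m : ℕ, s ≠ -m := fun m => by exact_mod_cast hs (-m)
  have hs₂ : ∀ m : ℕ, 1 - s ≠ -m := fun m h => hs (m + 1) (by push_cast; linear_combination -h)
  have hsin : sin (π * s) ≠ 0 := by
    rw [sin_ne_zero_iff]
    intro k hk
    exact hs k (mul_left_cancel₀ (ofReal_ne_zero.2 pi_ne_zero) (by rw [hk]; ring))
  have h := congrArg (logDeriv · s) (funext Gamma_mul_Gamma_one_sub)
  rw [logDeriv_mul (f := Gamma) (g := fun z => Gamma (1 - z)) s (Gamma_ne_zero hs₁)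
      (Gamma_ne_zero hs₂) (differentiableAt_Gamma _ hs₁)
      ((differentiableAt_Gamma _ hs₂).comp s (by fun_prop)),
    logDeriv_div (f := fun _ => (π : ℂ)) (g := fun z => sin (π * z)) s
      (ofReal_ne_zero.2 pi_ne_zero) hsin (by fun_prop) (by fun_prop),
    show (fun z => Gamma (1 - z)) = Gamma ∘ (fun z => 1 - z) from rfl,
    logDeriv_comp (g := fun z => 1 - z) (x := s) (differentiableAt_Gamma _ hs₂) (by fun_prop),
    show (fun z => sin (π * z)) = sin ∘ (fun z => π * z) from rfl,
    logDeriv_comp differentiableAt_sin (by fun_prop), logDeriv_sin] at h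
  simp only [deriv_const_sub_id', mul_neg, mul_one, logDeriv_const, Pi.zero_apply,
    deriv_const_mul_id', zero_sub] at h
  rw [digamma_def]
  linear_combination h

lemma digamma_add_digamma_add_half {s : ℂ} (hs : ∀ m : ℕ, 2 * s ≠ -m) :
    digamma s + digamma (s + 1 / 2) = 2 * digamma (2 * s) - 2 * log 2 := by
  have hs₁ : ∀ m : ℕ, s ≠ -m := fun m h => hs (2 * m) (by rw [h]; push_cast; ring)
  have hs₂ : ∀ m : ℕ, s + 1 / 2 ≠ -m := fun m h =>
    hs (2 * m + 1) (by push_cast; linear_combination 2 * h)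
  have hcpow :
      HasDerivAt (fun z : ℂ => (2 : ℂ) ^ (1 - 2 * z)) (2 ^ (1 - 2 * s) * log 2 * -2) s := by
    have h : HasDerivAt (fun z : ℂ => 1 - 2 * z) (-2) s := by
      simpa using ((hasDerivAt_id s).const_mul (2 : ℂ)).const_sub 1
    exact h.const_cpow (Or.inl two_ne_zero)
  have hcpow₀ : (2 : ℂ) ^ (1 - 2 * s) ≠ 0 := cpow_ne_zero_iff.2 (Or.inl two_ne_zero)
  have h := congrArg (logDeriv · s) (funext Gamma_mul_Gamma_add_half)
  rw [logDeriv_mul (f := Gamma) (g := fun z => Gamma (z + 1 / 2)) s (Gamma_ne_zero hs₁)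
      (Gamma_ne_zero hs₂) (differentiableAt_Gamma _ hs₁)
      ((differentiableAt_Gamma _ hs₂).comp s (by fun_prop)),
    logDeriv_mul_const (f := fun z => Gamma (2 * z) * 2 ^ (1 - 2 * z)) s _
      (ofReal_ne_zero.2 (Real.sqrt_pos.2 pi_pos).ne'),
    logDeriv_mul (f := fun z => Gamma (2 * z)) (g := fun z => (2 : ℂ) ^ (1 - 2 * z)) s
      (Gamma_ne_zero hs) hcpow₀ ((differentiableAt_Gamma _ hs).comp s (by fun_prop))
      hcpow.differentiableAt,
    show (fun z => Gamma (z + 1 / 2)) = Gamma ∘ (fun z => z + 1 / 2) from rfl,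
    logDeriv_comp (g := fun z => z + 1 / 2) (x := s) (differentiableAt_Gamma _ hs₂) (by fun_prop),
    show (fun z => Gamma (2 * z)) = Gamma ∘ (fun z => 2 * z) from rfl,
    logDeriv_comp (g := fun z => 2 * z) (x := s) (differentiableAt_Gamma _ hs) (by fun_prop),
    logDeriv_apply (fun z : ℂ => (2 : ℂ) ^ (1 - 2 * z)) s, hcpow.deriv] at h
  simp only [deriv_add_const', deriv_id'', deriv_const_mul_id', mul_assoc,
    mul_div_cancel_left₀ _ hcpow₀] at h
  rw [digamma_def]
  linear_combination h

lemma hasDerivAt_pi_mul_cos_div_sin_one_half :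
    HasDerivAt (fun s : ℂ => π * (cos (π * s) / sin (π * s))) (-π ^ 2) (1 / 2) := by
  have hπ : HasDerivAt (fun s : ℂ => π * s) π (1 / 2) := by
    simpa using (hasDerivAt_id _).const_mul (π : ℂ)
  have hsin : HasDerivAt (fun s : ℂ => sin (π * s)) _ (1 / 2) := (hasDerivAt_sin _).comp _ hπ
  have hcos : HasDerivAt (fun s : ℂ => cos (π * s)) _ (1 / 2) := (hasDerivAt_cos _).comp _ hπ
  have hsin1 : sin (π * (1 / 2)) = 1 := by rw [mul_one_div, sin_pi_div_two]
  have hcos0 : cos (π * (1 / 2)) = 0 := by rw [mul_one_div, cos_pi_div_two]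
  refine ((hcos.fun_div hsin (by rw [hsin1]; exact one_ne_zero)).const_mul (π : ℂ)).congr_deriv ?_
  rw [hsin1, hcos0]
  ring

lemma deriv_digamma_one_half : deriv digamma (1 / 2) = π ^ 2 / 2 := by
  have hU : {s : ℂ | 0 < s.re ∧ s.re < 1} ∈ 𝓝 (1 / 2 : ℂ) :=
    ((isOpen_lt continuous_const continuous_re).inter
      (isOpen_lt continuous_re continuous_const)).mem_nhds (by norm_num)
  have heq : (fun s => digamma s - digamma (1 - s)) =ᶠ[𝓝 (1 / 2)]
      fun s => -(π * (cos (π * s) / sin (π * s))) := by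
    filter_upwards [hU] with s hs
    rw [digamma_sub_digamma_one_sub, cot_eq_cos_div_sin]
    rintro n rfl
    have : (0 : ℝ) < n ∧ (n : ℝ) < 1 := by simpa using hs
    norm_cast at this
    omega
  have hL : HasDerivAt (fun s => digamma s - digamma (1 - s))
      (deriv digamma (1 / 2) + deriv digamma (1 / 2)) (1 / 2) := by
    have hd := (analyticAt_digamma (ne_neg_natCast_of_re_pos (s := 1 / 2) (by norm_num))
      ).differentiableAt.hasDerivAt
    have h1 := hd.comp_of_eq (1 / 2) ((hasDerivAt_id (1 / 2 : ℂ)).const_sub 1) (by norm_num)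
    refine (hd.sub h1).congr_deriv ?_
    ring
  linear_combination
    (hL.congr_of_eventuallyEq heq.symm).unique hasDerivAt_pi_mul_cos_div_sin_one_half.neg / 2

lemma deriv_digamma_one : deriv digamma 1 = π ^ 2 / 6 := by
  have heq : (fun s => digamma s + digamma (s + 1 / 2)) =ᶠ[𝓝 (1 / 2)]
      fun s => 2 * digamma (2 * s) - 2 * log 2 := by
    filter_upwards [(isOpen_lt continuous_const continuous_re).mem_nhds
      (by norm_num : (0 : ℝ) < (1 / 2 : ℂ).re)] with s hs
    exact digamma_add_digamma_add_half (ne_neg_natCast_of_re_pos (by simpa using hs))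
  have hd : ∀ {s : ℂ}, 0 < s.re → HasDerivAt digamma (deriv digamma s) s := fun hs =>
    (analyticAt_digamma (ne_neg_natCast_of_re_pos hs)).differentiableAt.hasDerivAt
  have hL : HasDerivAt (fun s => digamma s + digamma (s + 1 / 2))
      (deriv digamma (1 / 2) + deriv digamma 1) (1 / 2) := by
    refine (hd (by norm_num)).add ((hd (s := 1) (by norm_num)).comp_of_eq (1 / 2)
      ((hasDerivAt_id (1 / 2 : ℂ)).add_const (1 / 2)) (by norm_num)) |>.congr_deriv ?_
    ring
  have hR : HasDerivAt (fun s => 2 * digamma (2 * s) - 2 * log 2)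
      (2 * (deriv digamma 1 * 2)) (1 / 2) := by
    refine (((hd (s := 1) (by norm_num)).comp_of_eq (1 / 2)
      ((hasDerivAt_id (1 / 2 : ℂ)).const_mul 2) (by norm_num)).const_mul 2).sub_const _
      |>.congr_deriv ?_
    ring
  linear_combination ((hL.congr_of_eventuallyEq heq.symm).unique hR - deriv_digamma_one_half) / -3

lemma deriv_deriv_Gamma_one :
    deriv (deriv Gamma) 1 = Real.eulerMascheroniConstant ^ 2 + π ^ 2 / 6 := by
  have h := (hasDerivAt_digamma (ne_neg_natCast_of_re_pos (s := 1) (by norm_num))).deriv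
  rw [deriv_digamma_one, Gamma_one, hasDerivAt_Gamma_one.deriv] at h
  linear_combination -h

end Complex

lemma integral_log_sub_sq_mul_exp_neg (L : ℝ) :
    ∫ t in Ioi 0, (log t - L) ^ 2 * exp (-t) =
      (L + eulerMascheroniConstant) ^ 2 + π ^ 2 / 6 := by
  set M : ℕ → ℝ := fun n => ∫ t in Ioi 0, log t ^ n * exp (-t)
  have hM (n : ℕ) : (M n : ℂ) = iteratedDeriv n Complex.Gamma 1 :=
    (Complex.iteratedDeriv_Gamma_one n).symm
  have hM₀ : M 0 = 1 := by
    have h := hM 0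
    rw [iteratedDeriv_zero, Complex.Gamma_one] at h
    exact_mod_cast h
  have hM₁ : M 1 = -eulerMascheroniConstant := by
    have h := hM 1
    rw [iteratedDeriv_one, Complex.hasDerivAt_Gamma_one.deriv] at h
    exact_mod_cast h
  have hM₂ : M 2 = eulerMascheroniConstant ^ 2 + π ^ 2 / 6 := by
    have h := hM 2
    rw [iteratedDeriv_succ, iteratedDeriv_one, Complex.deriv_deriv_Gamma_one] at h
    exact_mod_cast h
  have hI := integrableOn_log_pow_mul_exp_neg
  calc ∫ t in Ioi 0, (log t - L) ^ 2 * exp (-t)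
      = ∫ t in Ioi 0, (log t ^ 2 * exp (-t) - 2 * L * (log t ^ 1 * exp (-t)))
          + L ^ 2 * (log t ^ 0 * exp (-t)) := by
        congr with t
        ring
    _ = M 2 - 2 * L * M 1 + L ^ 2 * M 0 := by
        rw [integral_add (by exact (hI 2).sub ((hI 1).const_mul _)) (by exact (hI 0).const_mul _),
          integral_sub (hI 2) ((hI 1).const_mul _), integral_const_mul, integral_const_mul]
    _ = (L + eulerMascheroniConstant) ^ 2 + π ^ 2 / 6 := by
        rw [hM₀, hM₁, hM₂]
        ring

lemma integral_expMeasure {r : ℝ} (hr : 0 < r) (g : ℝ → ℝ) :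
    ∫ x, g x ∂expMeasure r = ∫ x in Ioi 0, r * exp (-(r * x)) * g x := by
  rw [expMeasure, gammaMeasure, integral_withDensity_eq_integral_toReal_smul (f := gammaPDF 1 r)
    (measurable_gammaPDFReal 1 r).ennreal_ofReal (ae_of_all _ fun _ => ENNReal.ofReal_lt_top),
    ← integral_Ici_eq_integral_Ioi,
    ← setIntegral_eq_integral_of_forall_compl_eq_zero (s := Ici 0) fun x hx => ?_]
  · refine setIntegral_congr_fun measurableSet_Ici fun x (hx : 0 ≤ x) => ?_
    simp [gammaPDF, gammaPDFReal, hx, hr.le, (exp_pos _).le]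
  · simp [gammaPDF, gammaPDFReal, show ¬ 0 ≤ x from hx]

lemma integral_log_sq_expMeasure {r : ℝ} (hr : 0 < r) :
    ∫ x, log x ^ 2 ∂expMeasure r = (log r + eulerMascheroniConstant) ^ 2 + π ^ 2 / 6 := by
  have hsubst : ∀ x ∈ Ioi (0 : ℝ), r * exp (-(r * x)) * log x ^ 2 =
      r * ((log (r * x) - log r) ^ 2 * exp (-(r * x))) := fun x (hx : 0 < x) => by
    rw [log_mul hr.ne' hx.ne']
    ring
  rw [integral_expMeasure hr, setIntegral_congr_fun measurableSet_Ioi hsubst, integral_const_mul,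
    integral_comp_mul_left_Ioi (fun u => (log u - log r) ^ 2 * exp (-u)) 0 hr, mul_zero,
    smul_eq_mul, mul_inv_cancel_left₀ hr.ne', integral_log_sub_sq_mul_exp_neg]

theorem stmt_6_general {Ω : Type*} [MeasureSpace Ω] (μ : Measure Ω)
    (ξ : Ω → ℝ) (c : ℝ) (hc : 0 < c)
    (hξ : Measure.map ξ μ = expMeasure (c * Real.exp (-Real.eulerMascheroniConstant))) :
    ∫ ω, (Real.log (ξ ω)) ^ 2 ∂μ = (Real.log c) ^ 2 + π ^ 2 / 6 := by
  set r := c * exp (-eulerMascheroniConstant)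
  have hr : 0 < r := by positivity
  have hξ_law : HasLaw ξ (expMeasure r) μ :=
    ⟨.of_map_ne_zero (hξ ▸ (isProbabilityMeasure_expMeasure hr).ne_zero), hξ⟩
  calc ∫ ω, log (ξ ω) ^ 2 ∂μ = ∫ x, log x ^ 2 ∂expMeasure r :=
        hξ_law.integral_comp (measurable_log.pow_const 2).aestronglyMeasurable
    _ = (log r + eulerMascheroniConstant) ^ 2 + π ^ 2 / 6 := integral_log_sq_expMeasure hr
    _ = log c ^ 2 + π ^ 2 / 6 := by
        rw [log_mul hc.ne' (exp_pos _).ne', log_exp]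
        ring

/-- If `ξ` is exponentially distributed with mean `e^γ / c` (`c > 0`, `γ` the
Euler–Mascheroni constant), then `E[(log ξ)²] = (log c)² + π²/6`. -/
theorem stmt_6 {Ω : Type*} [MeasureSpace Ω] (μ : Measure Ω) [IsProbabilityMeasure μ]
    (ξ : Ω → ℝ) (c : ℝ) (hc : 0 < c)
    (hξ : Measure.map ξ μ = expMeasure (c * Real.exp (-Real.eulerMascheroniConstant))) :
    ∫ ω, (Real.log (ξ ω)) ^ 2 ∂μ = (Real.log c) ^ 2 + π ^ 2 / 6 :=
  stmt_6_general μ ξ c hc hξ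
end
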